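/- arXiv:1803.04202 — 2 statements merged into one kernel-verified Lean document; each statement's English description precedes it below -/
import Mathlib

section
/- Let w be a group word and G a group such that for every w-value x ∈ G_w the centralizer C_{w(G)}(x) has index at most m in the verbal subgroup w(G). Then for every w-value x, the subgroup [w(G), x] is finite of order bounded by a function of m only. -/
/-- The set of values of the word `w` in the group `G`. -/
def wValues {n : ℕ} (w : FreeGroup (Fin n)) (G : Type*) [Group G] : Set G :=
  {x | ∃ g : Fin n → G, FreeGroup.lift g w = x}

/-- The verbal subgroup of `G` determined by `w`. -/
def verbal {n : ℕ} (w : FreeGroup (Fin n)) (G : Type*) [Group G] : Subgroup G :=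
  Subgroup.closure (wValues w G)

open scoped commutatorElement

/-!
Write `H = w(G)`, generated by the set `X = G_w`, which is closed under conjugation, and
`K = [H, x]`. Since `⁅h, x⁆ = (h x h⁻¹) x⁻¹`, the group `K` is generated by at most `m` elements,
each centralised by a subgroup of index at most `m²` in `H`; so the centre of `K` has bounded
index and Schur's theorem bounds `|K'|`. For `y ∈ X` the same argument applied to `⟨y, x⟩` bounds
the order of `⁅y, x⁆` by some `L`, so `⁅y, x⁆ ^ L! = 1`. The map `h ↦ ⁅h, x⁆ K'` is a crossed
homomorphism `H → K / K'`, because `⁅a b, x⁆ = a ⁅b, x⁆ a⁻¹ ⁅a, x⁆`; as `X` generates `H`, all its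
values are killed by `L!`. Hence `K / K'` is an abelian group generated by at most `m` elements
of exponent dividing `L!`, and `|K| = |K / K'| |K'|` is bounded in terms of `m`.
-/

open Subgroup

section

variable {G : Type*} [Group G]

theorem commutatorElement_mul_mem_center {a b z z' : G} (hz : z ∈ center G)
    (hz' : z' ∈ center G) : ⁅a * z, b * z'⁆ = ⁅a, b⁆ :=
  calc ⁅a * z, b * z'⁆ = a * (z * (b * z') * z⁻¹) * a⁻¹ * (b * z')⁻¹ := by group
    _ = a * b * (z' * a⁻¹ * z'⁻¹) * b⁻¹ := by
      rw [← mem_center_iff.mp hz, mul_inv_cancel_right]; group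
    _ = ⁅a, b⁆ := by rw [← mem_center_iff.mp hz', mul_inv_cancel_right]; group

theorem Subgroup.natCard_commutatorSet_le_index_center_sq (h : (center G).index ≠ 0) :
    Finite (commutatorSet G) ∧ Nat.card (commutatorSet G) ≤ (center G).index ^ 2 := by
  have : Finite (G ⧸ center G) := Nat.finite_of_card_ne_zero h
  let f : G ⧸ center G → G ⧸ center G → G :=
    Quotient.lift₂ (fun a b => ⁅a, b⁆) fun a b c d hac hbd => by
      rw [← mul_inv_cancel_left a c, ← mul_inv_cancel_left b d]
      exact (commutatorElement_mul_mem_center (QuotientGroup.leftRel_apply.mp hac)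
        (QuotientGroup.leftRel_apply.mp hbd)).symm
  have hrange : commutatorSet G = Set.range (Function.uncurry f) := by
    ext g
    refine ⟨fun ⟨a, b, hab⟩ => ⟨(a, b), hab⟩, ?_⟩
    rintro ⟨⟨p, q⟩, rfl⟩
    induction p, q using Quotient.inductionOn₂ with
    | h a b => exact ⟨a, b, rfl⟩
  rw [hrange, sq]
  exact ⟨Set.finite_range _, (Finite.card_range_le _).trans_eq (Nat.card_prod _ _)⟩

-- `card_commutator_dvd_index_center_pow` for a group with at most `n ^ 2` commutators
def schurBound (n : ℕ) : ℕ := n ^ (n ^ 3 + 1)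

theorem Subgroup.natCard_commutator_le_schurBound {n : ℕ} (h0 : (center G).index ≠ 0)
    (hn : (center G).index ≤ n) :
    0 < Nat.card (_root_.commutator G) ∧ Nat.card (_root_.commutator G) ≤ schurBound n := by
  obtain ⟨hfin, hcard⟩ := natCard_commutatorSet_le_index_center_sq h0
  have hdvd := card_commutator_dvd_index_center_pow G
  have hpos : 0 < (center G).index := Nat.pos_of_ne_zero h0
  refine ⟨Nat.card_pos, (Nat.le_of_dvd (by positivity) hdvd).trans ?_⟩
  calc (center G).index ^ ((center G).index * Nat.card (commutatorSet G) + 1)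
      ≤ n ^ ((center G).index * Nat.card (commutatorSet G) + 1) := Nat.pow_le_pow_left hn _
    _ ≤ schurBound n := by
      refine Nat.pow_le_pow_right (hpos.trans_le hn) (Nat.succ_le_succ ?_)
      calc (center G).index * Nat.card (commutatorSet G) ≤ n * n ^ 2 :=
            Nat.mul_le_mul hn (hcard.trans (Nat.pow_le_pow_left hn 2))
        _ = n ^ 3 := by ring

theorem relIndex_centralizer_finset_le {H : Subgroup G} {n : ℕ} (V : Finset G)
    (hV : ∀ v ∈ V, 0 < (centralizer {v}).relIndex H ∧ (centralizer {v}).relIndex H ≤ n) :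
    0 < (centralizer (V : Set G)).relIndex H ∧
      (centralizer (V : Set G)).relIndex H ≤ n ^ V.card := by
  have hV' : centralizer (V : Set G) = ⨅ v : V, centralizer {(v : G)} := by
    rw [centralizer_eq_iInf, iInf_subtype']
    rfl
  rw [hV']
  refine ⟨Nat.pos_of_ne_zero (relIndex_iInf_ne_zero fun v => (hV v v.2).1.ne'),
    (relIndex_iInf_le _).trans ?_⟩
  calc ∏ v : V, (centralizer {(v : G)}).relIndex H ≤ ∏ _v : V, n :=
        Finset.prod_le_prod' fun v _ => (hV v v.2).2
    _ = n ^ V.card := by simp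

theorem index_center_closure_le {H : Subgroup G} {n : ℕ} (V : Finset G) (hVH : (V : Set G) ⊆ H)
    (hV : ∀ v ∈ V, 0 < (centralizer {v}).relIndex H ∧ (centralizer {v}).relIndex H ≤ n) :
    (center (closure (V : Set G))).index ≠ 0 ∧
      (center (closure (V : Set G))).index ≤ n ^ V.card := by
  set P := closure (V : Set G)
  obtain ⟨hpos, hle⟩ := relIndex_centralizer_finset_le V hV
  have hPH : P ≤ H := closure_le H |>.mpr hVH
  have hcen : (centralizer (V : Set G)).subgroupOf P ≤ center P := by
    intro z hz
    rw [mem_subgroupOf, ← centralizer_closure] at hz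
    exact mem_center_iff.mpr fun g => Subtype.ext (mem_centralizer_iff.mp hz g g.2)
  have hdvd : (center P).index ∣ (centralizer (V : Set G)).relIndex P := index_dvd_of_le hcen
  have hne : (centralizer (V : Set G)).relIndex P ≠ 0 :=
    fun h => hpos.ne' (relIndex_eq_zero_of_le_right hPH h)
  exact ⟨ne_zero_of_dvd_ne_zero hne hdvd, (Nat.le_of_dvd (Nat.pos_of_ne_zero hne) hdvd).trans
    ((relIndex_le_of_le_right hPH hpos.ne').trans hle)⟩

theorem commutatorElement_pow_factorial_eq_one {H : Subgroup G} {n : ℕ} {x y : G} (hx : x ∈ H)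
    (hy : y ∈ H) (hxn : 0 < (centralizer {x}).relIndex H ∧ (centralizer {x}).relIndex H ≤ n)
    (hyn : 0 < (centralizer {y}).relIndex H ∧ (centralizer {y}).relIndex H ≤ n) :
    ⁅y, x⁆ ^ (schurBound (n ^ 2)).factorial = 1 := by
  classical
  obtain ⟨h0, hidx⟩ := index_center_closure_le (H := H) (n := n) {y, x}
    (by simp [Set.insert_subset_iff, hx, hy]) (by simp [hxn, hyn])
  have hn : 0 < n := hxn.1.trans_le hxn.2
  obtain ⟨hpos, hle⟩ := natCard_commutator_le_schurBound h0
    (hidx.trans (Nat.pow_le_pow_right hn Finset.card_le_two))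
  set P := closure (({y, x} : Finset G) : Set G)
  have hyP : y ∈ P := subset_closure (by simp)
  have hxP : x ∈ P := subset_closure (by simp)
  let c : _root_.commutator P :=
    ⟨⁅⟨y, hyP⟩, ⟨x, hxP⟩⁆, commutator_mem_commutator (mem_top _) (mem_top _)⟩
  obtain ⟨k, hk⟩ := Nat.dvd_factorial hpos hle
  have hc : c ^ (schurBound (n ^ 2)).factorial = 1 := by
    rw [hk, pow_mul, pow_card_eq_one', one_pow]
  simpa [c, commutatorElement_def] using
    congrArg (fun c : _root_.commutator P => ((c : P) : G)) hc

theorem pow_eq_one_of_cocycle {Γ A : Type*} [Group Γ] [CommGroup A] {X : Set Γ}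
    (hX : closure X = ⊤) (φ : Γ → A →* A) (δ : Γ → A) (hδ1 : δ 1 = 1)
    (hδ : ∀ a b, δ (a * b) = φ a (δ b) * δ a) {n : ℕ} (hn : ∀ x ∈ X, δ x ^ n = 1) (g : Γ) :
    δ g ^ n = 1 := by
  induction (hX ▸ mem_top g : g ∈ closure X) using closure_induction with
  | mem x hx => exact hn x hx
  | one => rw [hδ1, one_pow]
  | mul a b _ _ ha hb => rw [hδ, mul_pow, ← map_pow, hb, ha, map_one, one_mul]
  | inv a _ ha =>
    have h : δ a⁻¹ = (φ a⁻¹ (δ a))⁻¹ :=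
      eq_inv_of_mul_eq_one_right (by rw [← hδ, inv_mul_cancel, hδ1])
    rw [h, inv_pow, ← map_pow, ha, map_one, inv_one]

theorem CommGroup.natCard_le_pow_of_closure_eq_top {A : Type*} [CommGroup A] {T : Finset A}
    (hT : closure (T : Set A) = ⊤) {n : ℕ} (hn : 0 < n) (hTn : ∀ t ∈ T, t ^ n = 1) :
    0 < Nat.card A ∧ Nat.card A ≤ n ^ T.card := by
  have : Group.FG A := ⟨⟨T, hT⟩⟩
  have hexp : ∀ a : A, a ^ n = 1 := by
    have : closure (T : Set A) ≤ (powMonoidHom n : A →* A).ker :=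
      (closure_le _).mpr fun t ht => hTn t ht
    exact fun a => this (hT ▸ mem_top a)
  have hdvd := card_dvd_exponent_pow_rank' A hexp
  have hpow : 0 < n ^ Group.rank A := by positivity
  exact ⟨Nat.pos_of_dvd_of_pos hdvd hpow,
    (Nat.le_of_dvd hpow hdvd).trans (Nat.pow_le_pow_right hn (Group.rank_le hT))⟩

theorem relIndex_centralizer_mul_inv_le {H : Subgroup G} {n : ℕ} {y z : G}
    (hy : 0 < (centralizer {y}).relIndex H ∧ (centralizer {y}).relIndex H ≤ n)
    (hz : 0 < (centralizer {z}).relIndex H ∧ (centralizer {z}).relIndex H ≤ n) :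
    0 < (centralizer {y * z⁻¹}).relIndex H ∧ (centralizer {y * z⁻¹}).relIndex H ≤ n * n := by
  have hle : centralizer {y} ⊓ centralizer {z} ≤ centralizer {y * z⁻¹} := by
    intro g hg
    obtain ⟨hgy, hgz⟩ := mem_inf.mp hg
    exact mem_centralizer_singleton_iff.mpr <| Commute.mul_right
      (mem_centralizer_singleton_iff.mp hgy)
      (Commute.inv_right (mem_centralizer_singleton_iff.mp hgz))
  have hne := relIndex_inf_ne_zero hy.1.ne' hz.1.ne'
  exact ⟨Nat.pos_of_ne_zero fun h => hne (relIndex_eq_zero_of_le_left hle h),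
    (relIndex_le_of_le_left hle hne).trans (relIndex_inf_le.trans (Nat.mul_le_mul hy.2 hz.2))⟩

-- `[H, x] = closure (commutatorsWith H x)`
def commutatorsWith (H : Subgroup G) (x : G) : Set G := {g | ∃ h ∈ H, ⁅h, x⁆ = g}

theorem commutatorsWith_finite_ncard_le {H : Subgroup G} {x : G} {m : ℕ}
    (hx : 0 < (centralizer {x}).relIndex H ∧ (centralizer {x}).relIndex H ≤ m) :
    (commutatorsWith H x).Finite ∧ (commutatorsWith H x).ncard ≤ m := by
  have : Finite (H ⧸ (centralizer {x}).subgroupOf H) := Nat.finite_of_card_ne_zero hx.1.ne'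
  let f : H ⧸ (centralizer {x}).subgroupOf H → G := Quotient.lift (fun h => ⁅(h : G), x⁆)
    fun a b hab => by
      obtain ⟨c, hc, hb⟩ : ∃ c ∈ centralizer {x}, (b : G) = a * c :=
        ⟨a⁻¹ * b, mem_subgroupOf.mp (QuotientGroup.leftRel_apply.mp hab), by simp⟩
      rw [hb, commutatorElement_def, commutatorElement_def, mul_assoc (a : G) c x,
        mem_centralizer_singleton_iff.mp hc]
      group
  have hrange : commutatorsWith H x = Set.range f := by
    ext g
    refine ⟨fun ⟨h, hh, hg⟩ => ⟨QuotientGroup.mk ⟨h, hh⟩, hg⟩, ?_⟩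
    rintro ⟨q, rfl⟩
    induction q using Quotient.inductionOn with
    | h a => exact ⟨a, a.2, rfl⟩
  rw [hrange, ← Nat.card_coe_set_eq]
  exact ⟨Set.finite_range f, (Finite.card_range_le f).trans hx.2⟩

theorem commutatorsWith_subset {H : Subgroup G} {x : G} (hx : x ∈ H) :
    commutatorsWith H x ⊆ H := by
  rintro - ⟨h, hh, rfl⟩
  rw [commutatorElement_def]
  exact mul_mem (mul_mem (mul_mem hh hx) (inv_mem hh)) (inv_mem hx)

theorem conj_mem_closure_commutatorsWith {H : Subgroup G} {x a k : G} (ha : a ∈ H)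
    (hk : k ∈ closure (commutatorsWith H x)) : a * k * a⁻¹ ∈ closure (commutatorsWith H x) := by
  have hgen : ∀ g ∈ H, ⁅g, x⁆ ∈ closure (commutatorsWith H x) :=
    fun g hg => subset_closure ⟨g, hg, rfl⟩
  suffices (closure (commutatorsWith H x)).map (MulAut.conj a).toMonoidHom ≤
      closure (commutatorsWith H x) from this ⟨k, hk, rfl⟩
  rw [MonoidHom.map_closure, closure_le]
  rintro - ⟨-, ⟨h, hh, rfl⟩, rfl⟩
  have hconj : a * ⁅h, x⁆ * a⁻¹ = ⁅a * h, x⁆ * ⁅a, x⁆⁻¹ := by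
    simp only [commutatorElement_def]; group
  show a * ⁅h, x⁆ * a⁻¹ ∈ _
  rw [hconj]
  exact mul_mem (hgen _ (mul_mem ha hh)) (inv_mem (hgen a ha))

theorem le_normalizer_closure_commutatorsWith (H : Subgroup G) (x : G) :
    H ≤ normalizer (closure (commutatorsWith H x) : Set G) := fun a ha =>
  mem_normalizer_iff.mpr fun k => ⟨conj_mem_closure_commutatorsWith ha, fun hk => by
    simpa [mul_assoc] using conj_mem_closure_commutatorsWith (inv_mem ha) hk⟩

theorem abelianization_of_commutatorElement_pow_eq_one {X : Set G} {m : ℕ}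
    (hX : ∀ y ∈ X, 0 < (centralizer {y}).relIndex (closure X) ∧
      (centralizer {y}).relIndex (closure X) ≤ m)
    {x : G} (hx : x ∈ X) {h : G} (hh : h ∈ closure X) :
    Abelianization.of (⟨⁅h, x⁆, subset_closure ⟨h, hh, rfl⟩⟩ :
      closure (commutatorsWith (closure X) x)) ^ (schurBound (m ^ 2)).factorial = 1 := by
  set K := closure (commutatorsWith (closure X) x)
  let δ : closure X → Abelianization K :=
    fun a => Abelianization.of ⟨⁅(a : G), x⁆, subset_closure ⟨a, a.2, rfl⟩⟩
  let φ : closure X → Abelianization K →* Abelianization K := fun a => Abelianization.map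
    (K.normalizerMonoidHom ⟨a, le_normalizer_closure_commutatorsWith _ x a.2⟩).toMonoidHom
  refine pow_eq_one_of_cocycle closure_closure_coe_preimage φ δ ?_ ?_ ?_ ⟨h, hh⟩
  · simp only [δ, OneMemClass.coe_one, commutatorElement_one_left]
    exact map_one Abelianization.of
  · intro a b
    simp only [δ, φ, Abelianization.map_of, ← map_mul]
    congr 1
    ext
    simp only [coe_mul, commutatorElement_def, MulEquiv.toMonoidHom_eq_coe, MonoidHom.coe_coe,
      normalizerMonoidHom_apply_apply_coe]
    group
  · intro y hy
    have hpow : (⟨⁅(y : G), x⁆, subset_closure ⟨y, y.2, rfl⟩⟩ : K) ^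
        (schurBound (m ^ 2)).factorial = 1 := Subtype.ext <| by
      simpa using commutatorElement_pow_factorial_eq_one (subset_closure hx) y.2 (hX x hx) (hX y hy)
    rw [← map_pow, hpow, map_one]

theorem natCard_abelianization_closure_commutatorsWith_le {X : Set G} {m : ℕ}
    (hX : ∀ y ∈ X, 0 < (centralizer {y}).relIndex (closure X) ∧
      (centralizer {y}).relIndex (closure X) ≤ m)
    {x : G} (hx : x ∈ X) :
    0 < Nat.card (Abelianization (closure (commutatorsWith (closure X) x))) ∧
      Nat.card (Abelianization (closure (commutatorsWith (closure X) x))) ≤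
        (schurBound (m ^ 2)).factorial ^ m := by
  set K := closure (commutatorsWith (closure X) x)
  obtain ⟨hSfin, hScard⟩ := commutatorsWith_finite_ncard_le (hX x hx)
  set S : Set K := Subtype.val ⁻¹' commutatorsWith (closure X) x
  have hSfin' : S.Finite := hSfin.preimage Subtype.val_injective.injOn
  have hT : closure ((hSfin'.image Abelianization.of).toFinset : Set (Abelianization K)) = ⊤ := by
    rw [Set.Finite.coe_toFinset, ← MonoidHom.map_closure, closure_closure_coe_preimage,
      ← MonoidHom.range_eq_map, MonoidHom.range_eq_top]
    exact QuotientGroup.mk_surjective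
  have hL := Nat.factorial_pos (schurBound (m ^ 2))
  refine (CommGroup.natCard_le_pow_of_closure_eq_top hT hL ?_).imp_right
    (·.trans (Nat.pow_le_pow_right hL ?_))
  · intro t ht
    obtain ⟨k, ⟨h, hh, hk⟩, rfl⟩ := (Set.Finite.mem_toFinset _).mp ht
    obtain rfl : k = ⟨⁅h, x⁆, subset_closure ⟨h, hh, rfl⟩⟩ := Subtype.ext hk.symm
    exact abelianization_of_commutatorElement_pow_eq_one hX hx hh
  · calc (hSfin'.image Abelianization.of).toFinset.card = (Abelianization.of '' S).ncard :=
          (Set.ncard_eq_toFinset_card _ _).symm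
      _ ≤ S.ncard := Set.ncard_image_le hSfin'
      _ = (commutatorsWith (closure X) x).ncard :=
          Set.ncard_preimage_of_injective_subset_range Subtype.val_injective (by
            intro g hg; exact ⟨⟨g, subset_closure hg⟩, rfl⟩)
      _ ≤ m := hScard

theorem natCard_commutator_closure_commutatorsWith_le {X : Set G} {m : ℕ}
    (hconj : ∀ g ∈ closure X, ∀ y ∈ X, g * y * g⁻¹ ∈ X)
    (hX : ∀ y ∈ X, 0 < (centralizer {y}).relIndex (closure X) ∧
      (centralizer {y}).relIndex (closure X) ≤ m)
    {x : G} (hx : x ∈ X) :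
    0 < Nat.card (_root_.commutator (closure (commutatorsWith (closure X) x))) ∧
      Nat.card (_root_.commutator (closure (commutatorsWith (closure X) x))) ≤
        schurBound ((m * m) ^ m) := by
  obtain ⟨hSfin, hScard⟩ := commutatorsWith_finite_ncard_le (hX x hx)
  have hV : ∀ v ∈ hSfin.toFinset, 0 < (centralizer {v}).relIndex (closure X) ∧
      (centralizer {v}).relIndex (closure X) ≤ m * m := by
    intro v hv
    obtain ⟨h, hh, rfl⟩ := (Set.Finite.mem_toFinset _).mp hv
    rw [commutatorElement_def]
    exact relIndex_centralizer_mul_inv_le (hX _ (hconj h hh x hx)) (hX x hx)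
  obtain ⟨h0, hidx⟩ := index_center_closure_le hSfin.toFinset
    (by simpa using commutatorsWith_subset (subset_closure hx)) hV
  rw [Set.Finite.coe_toFinset] at h0 hidx
  have hm : 0 < m * m := by have := (hX x hx).1.trans_le (hX x hx).2; positivity
  refine natCard_commutator_le_schurBound h0 (hidx.trans (Nat.pow_le_pow_right hm ?_))
  rwa [← Set.ncard_eq_toFinset_card _ hSfin]

def commutatorsWithBound (m : ℕ) : ℕ :=
  (schurBound (m ^ 2)).factorial ^ m * schurBound ((m * m) ^ m)

theorem natCard_closure_commutatorsWith_le {X : Set G} {m : ℕ}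
    (hconj : ∀ g ∈ closure X, ∀ y ∈ X, g * y * g⁻¹ ∈ X)
    (hX : ∀ y ∈ X, 0 < (centralizer {y}).relIndex (closure X) ∧
      (centralizer {y}).relIndex (closure X) ≤ m)
    {x : G} (hx : x ∈ X) :
    0 < Nat.card (closure (commutatorsWith (closure X) x)) ∧
      Nat.card (closure (commutatorsWith (closure X) x)) ≤ commutatorsWithBound m := by
  obtain ⟨hab0, hab⟩ := natCard_abelianization_closure_commutatorsWith_le hX hx
  obtain ⟨hcomm0, hcomm⟩ := natCard_commutator_closure_commutatorsWith_le hconj hX hx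
  rw [card_eq_card_quotient_mul_card_subgroup (_root_.commutator _)]
  exact ⟨Nat.mul_pos hab0 hcomm0, Nat.mul_le_mul hab hcomm⟩

theorem map_mem_wValues {n : ℕ} {w : FreeGroup (Fin n)} {G' : Type*} [Group G'] (f : G →* G')
    {y : G} (hy : y ∈ wValues w G) : f y ∈ wValues w G' := by
  obtain ⟨g, rfl⟩ := hy
  refine ⟨f ∘ g, ?_⟩
  rw [← MonoidHom.comp_apply]
  congr 1
  ext
  simp

end

/-- Lemma 2.3: if every `w`-value has centralizer of index at most `m` in `w(G)`,
then `[w(G), x]` has `m`-bounded finite order for every `w`-value `x`. -/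
theorem stmt_3 :
    ∃ f : ℕ → ℕ, ∀ (k m : ℕ) (G : Type*) [Group G] (w : FreeGroup (Fin k)),
      (∀ x ∈ wValues w G,
        0 < (Subgroup.centralizer {x}).relIndex (verbal w G) ∧
          (Subgroup.centralizer {x}).relIndex (verbal w G) ≤ m) →
      ∀ x ∈ wValues w G,
        0 < Nat.card (Subgroup.closure {y : G | ∃ h ∈ verbal w G, ⁅h, x⁆ = y}) ∧
          Nat.card (Subgroup.closure {y : G | ∃ h ∈ verbal w G, ⁅h, x⁆ = y}) ≤ f m :=
  ⟨commutatorsWithBound, fun _ _ _ _ _ hX _ hx => natCard_closure_commutatorsWith_le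
    (fun g _ _ hy => map_mem_wValues (MulAut.conj g).toMonoidHom hy) hX hx⟩
end

section
/- Let w = w(x₁,…,x_n) be a multilinear commutator word, K a group and M a normal subgroup of K. Suppose w(k₁M,…,k_nM) = 1 for some k₁,…,k_n ∈ K, meaning every value w(k₁u₁,…,k_nu_n) with uᵢ ∈ M is trivial. Then for every proper subset I ⊊ {1,…,n}, one has w_I(kᵢM; M) = 1, i.e., every value w(c₁,…,c_n) with cᵢ ∈ kᵢM for i ∈ I and cᵢ ∈ M for i ∉ I is trivial. -/
/-- Multilinear commutator words (outer commutator words) on `n` (pairwise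
distinct) variables: the single variable is one, and the commutator of two
multilinear commutator words in disjoint variables is one. -/
inductive MlWord : ℕ → Type
  | var : MlWord 1
  | comm : ∀ {a b : ℕ}, MlWord a → MlWord b → MlWord (a + b)

open scoped commutatorElement

/-- Evaluation of a multilinear commutator word at a tuple of group elements. -/
def MlWord.eval {G : Type*} [Group G] : ∀ {n : ℕ}, MlWord n → (Fin n → G) → G
  | _, .var, g => g 0
  | _, .comm u v, g =>
      ⁅u.eval fun i => g (Fin.castAdd _ i), v.eval fun i => g (Fin.natAdd _ i)⁆

/-!
Fix a tuple `g` of cosets of `M`. If `x` lifts `g` except at one coordinate, which lies in `M`,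
then `w(x) = w(y)⁻¹ w(z)` for two lifts `y`, `z` of `g`. This goes by induction on `w`: for
`w = [u, v]` the inner value `W = u(…)` (or `v(…)`) is of the form `a⁻¹ b` and lies in `M`, and
expanding `[a⁻¹ b, c]` produces commutators of values at lifts of `g`, because conjugating by an
element of `M` does not change cosets. Hence if `w` vanishes on the lifts of `g`, it also vanishes
when the cosets of `g` are replaced by `M` one coordinate at a time.
-/

theorem commutatorElement_inv_mul_left {G : Type*} [Group G] (a b c : G) :
    ⁅a⁻¹ * b, c⁆ = ⁅a, (a⁻¹ * b) * c * (a⁻¹ * b)⁻¹⁆⁻¹ * ⁅b, c⁆ := by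
  simp only [commutatorElement_def]; group

theorem commutatorElement_inv_mul_right {G : Type*} [Group G] (a b c : G) :
    ⁅c, a⁻¹ * b⁆ = ⁅c, b⁆ * ⁅(a⁻¹ * b) * c * (a⁻¹ * b)⁻¹, a⁆⁻¹ := by
  simp only [commutatorElement_def]; group

theorem eq_conj_inv_mul_of_eq_mul_inv {G : Type*} [Group G] {t x y : G} (h : t = y * x⁻¹) :
    t = (t * x * t⁻¹)⁻¹ * y := by
  subst h; group

namespace MlWord

theorem map_eval {G H : Type*} [Group G] [Group H] (φ : G →* H) :
    ∀ {n : ℕ} (w : MlWord n) (x : Fin n → G), φ (w.eval x) = w.eval (φ ∘ x)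
  | _, .var, _ => rfl
  | _, .comm u v, x => by
      simp only [eval, map_commutatorElement, map_eval φ u, map_eval φ v]; rfl

theorem eval_conj {G : Type*} [Group G] {n : ℕ} (w : MlWord n) (t : G) (x : Fin n → G) :
    w.eval (fun i => t * x i * t⁻¹) = t * w.eval x * t⁻¹ :=
  (w.map_eval (MulAut.conj t).toMonoidHom x).symm

theorem eval_comm_append {G : Type*} [Group G] {a b : ℕ} (u : MlWord a) (v : MlWord b)
    (p : Fin a → G) (q : Fin b → G) : (comm u v).eval (Fin.append p q) = ⁅u.eval p, v.eval q⁆ := by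
  simp [eval]

end MlWord

theorem Fin.comp_append_eq {α β : Type*} {a b : ℕ} {f : α → β} {p : Fin a → α} {q : Fin b → α}
    {g : Fin (a + b) → β} (hp : f ∘ p = g ∘ Fin.castAdd b) (hq : f ∘ q = g ∘ Fin.natAdd a) :
    f ∘ Fin.append p q = g := by
  funext i
  induction i using Fin.addCases with
  | left i => simpa using congrFun hp i
  | right i => simpa using congrFun hq i

theorem Fin.update_castAdd_comp_natAdd {β : Type*} {a b : ℕ} (g : Fin (a + b) → β) (j : Fin a)
    (c : β) : Function.update g (Fin.castAdd b j) c ∘ Fin.natAdd a = g ∘ Fin.natAdd a :=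
  Function.update_comp_eq_of_forall_ne _ _ fun i h => by
    simp only [Fin.ext_iff, Fin.val_natAdd, Fin.val_castAdd] at h; omega

theorem Fin.update_natAdd_comp_castAdd {β : Type*} {a b : ℕ} (g : Fin (a + b) → β) (j : Fin b)
    (c : β) : Function.update g (Fin.natAdd a j) c ∘ Fin.castAdd b = g ∘ Fin.castAdd b :=
  Function.update_comp_eq_of_forall_ne _ _ fun i h => by
    simp only [Fin.ext_iff, Fin.val_natAdd, Fin.val_castAdd] at h; omega

section Quotient

variable {K : Type*} [Group K] {M : Subgroup K}

namespace MlWord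

def IsInvMulOnLifts {n : ℕ} (w : MlWord n) (g : Fin n → K ⧸ M) (t : K) : Prop :=
  ∃ y z : Fin n → K, (↑) ∘ y = g ∧ (↑) ∘ z = g ∧ t = (w.eval y)⁻¹ * w.eval z

theorem IsInvMulOnLifts.eq_one {n : ℕ} {w : MlWord n} {g : Fin n → K ⧸ M} {t : K}
    (h : w.IsInvMulOnLifts g t) (hg : ∀ x : Fin n → K, (↑) ∘ x = g → w.eval x = 1) : t = 1 := by
  obtain ⟨y, z, hy, hz, rfl⟩ := h
  rw [hg y hy, hg z hz, inv_one, one_mul]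

end MlWord

variable [M.Normal]

theorem QuotientGroup.mk_comp_conj_of_mem {ι : Type*} {t : K} (ht : t ∈ M) (x : ι → K) :
    ((↑) : K → K ⧸ M) ∘ (fun i => t * x i * t⁻¹) = (↑) ∘ x := by
  funext i
  simp [(QuotientGroup.eq_one_iff t).mpr ht]

namespace MlWord

theorem IsInvMulOnLifts.mem {n : ℕ} {w : MlWord n} {g : Fin n → K ⧸ M} {t : K}
    (h : w.IsInvMulOnLifts g t) : t ∈ M := by
  obtain ⟨y, z, hy, hz, rfl⟩ := h
  rw [← QuotientGroup.eq]
  have := w.map_eval (QuotientGroup.mk' M)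
  simp only [QuotientGroup.coe_mk'] at this
  rw [this, this, hy, hz]

theorem IsInvMulOnLifts.comm_castAdd {a b : ℕ} {u : MlWord a} (v : MlWord b)
    {g : Fin (a + b) → K ⧸ M} {x : Fin (a + b) → K}
    (hxL : u.IsInvMulOnLifts (g ∘ Fin.castAdd b) (u.eval (x ∘ Fin.castAdd b)))
    (hxR : (↑) ∘ (x ∘ Fin.natAdd a) = g ∘ Fin.natAdd a) :
    (comm u v).IsInvMulOnLifts g ((comm u v).eval x) := by
  have hWM := hxL.mem
  obtain ⟨yL, zL, hyL, hzL, hW⟩ := hxL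
  refine ⟨Fin.append yL fun i => u.eval (x ∘ Fin.castAdd b) * x (Fin.natAdd a i) *
      (u.eval (x ∘ Fin.castAdd b))⁻¹, Fin.append zL (x ∘ Fin.natAdd a),
    Fin.comp_append_eq hyL ?_, Fin.comp_append_eq hzL hxR, ?_⟩
  · rw [QuotientGroup.mk_comp_conj_of_mem hWM]
    exact hxR
  · change ⁅u.eval (x ∘ Fin.castAdd b), v.eval (x ∘ Fin.natAdd a)⁆ = _
    rw [eval_comm_append, eval_comm_append, eval_conj, hW]
    exact commutatorElement_inv_mul_left _ _ _

theorem IsInvMulOnLifts.comm_natAdd {a b : ℕ} (u : MlWord a) {v : MlWord b}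
    {g : Fin (a + b) → K ⧸ M} {x : Fin (a + b) → K}
    (hxL : (↑) ∘ (x ∘ Fin.castAdd b) = g ∘ Fin.castAdd b)
    (hxR : v.IsInvMulOnLifts (g ∘ Fin.natAdd a) (v.eval (x ∘ Fin.natAdd a))) :
    (comm u v).IsInvMulOnLifts g ((comm u v).eval x) := by
  have hWM := hxR.mem
  obtain ⟨yR, zR, hyR, hzR, hW⟩ := hxR
  have hTM : (comm u v).eval x ∈ M := Subgroup.commutator_le_right ⊤ M
    (Subgroup.commutator_mem_commutator (Subgroup.mem_top _) hWM)
  -- The expansion of `⁅c, a⁻¹ * b⁆` has the inverse on the wrong side; since the value lies in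
  -- `M`, conjugating by it moves the inverse to the left.
  refine ⟨fun i => (comm u v).eval x * Fin.append (fun i => v.eval (x ∘ Fin.natAdd a) *
      x (Fin.castAdd b i) * (v.eval (x ∘ Fin.natAdd a))⁻¹) yR i * ((comm u v).eval x)⁻¹,
    Fin.append (x ∘ Fin.castAdd b) zR, ?_, Fin.comp_append_eq hxL hzR, ?_⟩
  · rw [QuotientGroup.mk_comp_conj_of_mem hTM]
    refine Fin.comp_append_eq ?_ hyR
    rw [QuotientGroup.mk_comp_conj_of_mem hWM]
    exact hxL
  · rw [eval_conj]
    apply eq_conj_inv_mul_of_eq_mul_inv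
    rw [eval_comm_append, eval_comm_append, eval_conj]
    change ⁅u.eval (x ∘ Fin.castAdd b), v.eval (x ∘ Fin.natAdd a)⁆ = _
    rw [hW]
    exact commutatorElement_inv_mul_right _ _ _

theorem isInvMulOnLifts_eval_of_eq_update {n : ℕ} (w : MlWord n) (g : Fin n → K ⧸ M)
    (j : Fin n) (x : Fin n → K) (hx : (↑) ∘ x = Function.update g j 1) :
    w.IsInvMulOnLifts g (w.eval x) := by
  induction w with
  | var =>
    obtain ⟨r, hr⟩ := QuotientGroup.mk_surjective (g 0)
    have hj : ((x 0 : K) : K ⧸ M) = 1 := by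
      simpa [Subsingleton.elim j 0] using congrFun hx 0
    refine ⟨fun _ => r, fun _ => r * x 0, ?_, ?_, by simp [eval]⟩ <;>
      funext i <;> simp [Subsingleton.elim i 0, hr, hj]
  | @comm a b u v ihu ihv =>
    induction j using Fin.addCases with
    | left j =>
      refine .comm_castAdd v (ihu _ j _ ?_) ?_
      · rw [← Function.comp_assoc, hx,
          Function.update_comp_eq_of_injective _ (Fin.castAdd_injective a b)]
      · rw [← Function.comp_assoc, hx, Fin.update_castAdd_comp_natAdd]
    | right j =>
      refine .comm_natAdd u ?_ (ihv _ j _ ?_)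
      · rw [← Function.comp_assoc, hx, Fin.update_natAdd_comp_castAdd]
      · rw [← Function.comp_assoc, hx,
          Function.update_comp_eq_of_injective _ (Fin.natAdd_injective _ _)]

theorem eval_eq_one_of_piecewise {n : ℕ} (w : MlWord n) {g : Fin n → K ⧸ M}
    (hg : ∀ x : Fin n → K, (↑) ∘ x = g → w.eval x = 1) (D : Finset (Fin n)) (x : Fin n → K)
    (hx : (↑) ∘ x = D.piecewise 1 g) : w.eval x = 1 := by
  induction D using Finset.induction_on generalizing x with
  | empty => exact hg x (by simpa using hx)
  | insert j D _ ih =>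
    rw [Finset.piecewise_insert, Pi.one_apply] at hx
    exact (w.isInvMulOnLifts_eval_of_eq_update _ j x hx).eq_one ih

end MlWord

end Quotient

theorem stmt_7_general {K : Type*} [Group K] {n : ℕ} (w : MlWord n) (M : Subgroup K)
    [M.Normal] (k : Fin n → K)
    (hw : ∀ u : Fin n → K, (∀ i, ∃ v ∈ M, k i * v = u i) → w.eval u = 1)
    (I : Finset (Fin n)) :
    ∀ c : Fin n → K, (∀ i ∈ I, ∃ v ∈ M, k i * v = c i) → (∀ i ∉ I, c i ∈ M) →
      w.eval c = 1 := by
  intro c hcI hcM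
  have hk (u : Fin n → K) (hu : (↑) ∘ u = ((↑) ∘ k : Fin n → K ⧸ M)) : w.eval u = 1 :=
    hw u fun i => ⟨(k i)⁻¹ * u i, QuotientGroup.eq.mp (congrFun hu i).symm, mul_inv_cancel_left _ _⟩
  refine w.eval_eq_one_of_piecewise hk Iᶜ c (funext fun i => ?_)
  by_cases hi : i ∈ I
  · obtain ⟨v, hv, hkv⟩ := hcI i hi
    simp [hi, ← hkv, (QuotientGroup.eq_one_iff v).mpr hv]
  · simp [hi, (QuotientGroup.eq_one_iff _).mpr (hcM i hi)]

/-- Corollary (uno2): if all values `w(k₁u₁, …, kₙuₙ)` with `uᵢ ∈ M ⊴ K` are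
trivial, then for every proper subset `I ⊊ {1,…,n}` all values with arguments
in `kᵢM` at positions in `I` and in `M` elsewhere are trivial. -/
theorem stmt_7 {K : Type*} [Group K] {n : ℕ} (w : MlWord n) (M : Subgroup K)
    [M.Normal] (k : Fin n → K)
    (hw : ∀ u : Fin n → K, (∀ i, ∃ v ∈ M, k i * v = u i) → w.eval u = 1)
    (I : Finset (Fin n)) (hI : I ≠ Finset.univ) :
    ∀ c : Fin n → K, (∀ i ∈ I, ∃ v ∈ M, k i * v = c i) → (∀ i ∉ I, c i ∈ M) →
      w.eval c = 1 :=
  stmt_7_general w M k hw I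
end
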